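/- Let Z ∈ ℝ^{n×d} satisfy ZZᵀ = dI_n, and let Y_a = A_aZ, Y_b = A_bZ with the linear kernels K_a = Y_aᵀY_a, K_b = Y_bᵀY_b. Assume additionally that the columns of Z sum to zero (Z·𝟙 = 0). Then the centered kernel alignment CKA(Y_a,Y_b) = Tr(K_aH K_bH)/√(Tr(K_aH K_aH)·Tr(K_bH K_bH)), with H = I_d − (1/d)𝟙𝟙ᵀ, equals Tr(G_aG_b)/√(Tr(G_a²)·Tr(G_b²)) where G_a = A_aᵀA_a, G_b = A_bᵀA_b, provided G_a and G_b are nonzero. -/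
import Mathlib


open Matrix

/-- With white (ZZᵀ = dI) and centered (Z𝟙 = 0) latents, linear CKA between
Ya = AaZ and Yb = AbZ equals the cosine similarity of the Gram matrices. -/
theorem stmt_4 {ma mb n d : ℕ} (hd : 0 < d)
    (Z : Matrix (Fin n) (Fin d) ℝ)
    (hZ : Z * Zᵀ = (d : ℝ) • (1 : Matrix (Fin n) (Fin n) ℝ))
    (hZc : Z.mulVec (fun _ => (1 : ℝ)) = 0)
    (Aa : Matrix (Fin ma) (Fin n) ℝ) (Ab : Matrix (Fin mb) (Fin n) ℝ)
    (hGa : Aaᵀ * Aa ≠ 0) (hGb : Abᵀ * Ab ≠ 0)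
    (H : Matrix (Fin d) (Fin d) ℝ)
    (hH : H = 1 - (d : ℝ)⁻¹ • Matrix.of (fun _ _ : Fin d => (1 : ℝ)))
    (Ka : Matrix (Fin d) (Fin d) ℝ) (hKa : Ka = (Aa * Z)ᵀ * (Aa * Z))
    (Kb : Matrix (Fin d) (Fin d) ℝ) (hKb : Kb = (Ab * Z)ᵀ * (Ab * Z)) :
    Matrix.trace (Ka * H * Kb * H) /
      Real.sqrt (Matrix.trace (Ka * H * Ka * H) * Matrix.trace (Kb * H * Kb * H)) =
    Matrix.trace ((Aaᵀ * Aa) * (Abᵀ * Ab)) /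
      Real.sqrt (Matrix.trace ((Aaᵀ * Aa) * (Aaᵀ * Aa)) *
        Matrix.trace ((Abᵀ * Ab) * (Abᵀ * Ab))) := by
  -- Z * J = 0
  have hZJ : Z * Matrix.of (fun _ _ : Fin d => (1 : ℝ)) = 0 := by
    ext i j
    have := congrFun hZc i
    simpa [Matrix.mul_apply, Matrix.mulVec, dotProduct] using this
  have hZH : Z * H = Z := by
    rw [hH, Matrix.mul_sub, Matrix.mul_one, Matrix.mul_smul, hZJ, smul_zero, sub_zero]
  have hKaH : Ka * H = Ka := by
    rw [hKa]; simp only [Matrix.transpose_mul, Matrix.mul_assoc]; rw [hZH]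
  have hKbH : Kb * H = Kb := by
    rw [hKb]; simp only [Matrix.transpose_mul, Matrix.mul_assoc]; rw [hZH]
  have key : ∀ (m₁ m₂ : ℕ) (A : Matrix (Fin m₁) (Fin n) ℝ) (B : Matrix (Fin m₂) (Fin n) ℝ),
      Matrix.trace (((A * Z)ᵀ * (A * Z)) * ((B * Z)ᵀ * (B * Z))) =
      ((d : ℝ) * d) * Matrix.trace ((Aᵀ * A) * (Bᵀ * B)) := by
    intro m₁ m₂ A B
    have h1 : ((A * Z)ᵀ * (A * Z)) * ((B * Z)ᵀ * (B * Z)) =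
        Zᵀ * ((Aᵀ * A) * ((Z * Zᵀ) * ((Bᵀ * B) * Z))) := by
      simp only [Matrix.transpose_mul, Matrix.mul_assoc]
    rw [h1, Matrix.trace_mul_comm]
    have h2 : (Aᵀ * A) * ((Z * Zᵀ) * ((Bᵀ * B) * Z)) * Zᵀ =
        ((d : ℝ) * d) • ((Aᵀ * A) * (Bᵀ * B)) := by
      rw [show (Aᵀ * A) * ((Z * Zᵀ) * ((Bᵀ * B) * Z)) * Zᵀ =
          (Aᵀ * A) * ((Z * Zᵀ) * ((Bᵀ * B) * (Z * Zᵀ))) from by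
        simp only [Matrix.mul_assoc], hZ]
      simp only [Matrix.smul_mul, Matrix.mul_smul, Matrix.one_mul, Matrix.mul_one,
        smul_smul, Matrix.mul_assoc]
    rw [h2, Matrix.trace_smul, smul_eq_mul]
  have e1 : Ka * H * Kb * H = Ka * Kb := by
    rw [hKaH, Matrix.mul_assoc, hKbH]
  have e2 : Ka * H * Ka * H = Ka * Ka := by
    rw [hKaH, Matrix.mul_assoc, hKaH]
  have e3 : Kb * H * Kb * H = Kb * Kb := by
    rw [hKbH, Matrix.mul_assoc, hKbH]
  rw [e1, e2, e3, hKa, hKb, key ma mb Aa Ab, key ma ma Aa Aa, key mb mb Ab Ab]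
  have hd2 : (0:ℝ) < (d:ℝ) * d := by positivity
  rw [show ((d:ℝ)*d) * Matrix.trace ((Aaᵀ * Aa) * (Aaᵀ * Aa)) *
      (((d:ℝ)*d) * Matrix.trace ((Abᵀ * Ab) * (Abᵀ * Ab))) =
      (((d:ℝ)*d) * ((d:ℝ)*d)) * (Matrix.trace ((Aaᵀ * Aa) * (Aaᵀ * Aa)) *
      Matrix.trace ((Abᵀ * Ab) * (Abᵀ * Ab))) by ring,
    Real.sqrt_mul (by positivity), Real.sqrt_mul_self (le_of_lt hd2)]
  rw [mul_div_mul_left _ _ (ne_of_gt hd2)]
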